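/- arXiv:2206.12630 — 3 statements merged into one kernel-verified Lean document; each statement's English description precedes it below -/
import Mathlib

section
/- There exists a 3-fold 16-coloring of the plane; that is, the 3-fold chromatic number of the plane satisfies χ_3 ≤ 16. -/
/-- An `m`-fold `k`-coloring of the Euclidean plane: each point gets an `m`-element
subset of `Fin k`, and points at Euclidean distance exactly 1 get disjoint sets. -/
def IsMfoldColoring (m k : ℕ) (c : EuclideanSpace ℝ (Fin 2) → Finset (Fin k)) : Prop :=
  (∀ x, (c x).card = m) ∧ ∀ x y, dist x y = 1 → Disjoint (c x) (c y)

/-- The plane admits an `m`-fold `k`-coloring. -/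
def MfoldColorable (m k : ℕ) : Prop :=
  ∃ c : EuclideanSpace ℝ (Fin 2) → Finset (Fin k), IsMfoldColoring m k c

/-- The `m`-fold chromatic number of the plane: the least `k` admitting an
`m`-fold `k`-coloring. -/
noncomputable def multifoldChromaticNumber (m : ℕ) : ℕ :=
  sInf {k | MfoldColorable m k}

/-!
Let `Λ` be the triangular lattice spanned by `e₁ = (1/2, 0)` and `e₂ = (1/4, √3/4)`, so that
`‖p • e₁ + q • e₂‖² = (p² + pq + q²) / 4`. The tile is the open disk of radius `1/2` about the
origin together with the two boundary points `e₁` and `e₂`; all distances inside it are `< 1`.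
The sixteen colour classes are the unions of the translates of the tile by the cosets of `4Λ`
in `Λ`. Distinct points of such a coset are at distance `≥ 2`, so no class contains two points at
distance `1`. Every point lies in a triangle of `Λ` (side `1/2`) and is at distance `< 1/2` from
its three vertices, unless it is itself a lattice point `v`; that one is covered by the tiles at
`v`, `v - e₁` and `v - e₂`. So every point lies in three classes.
-/

open Metric Pointwise

theorem mfoldColorable_of_cover {ι : Type*} [Fintype ι] {m : ℕ}
    (S : ι → Set (EuclideanSpace ℝ (Fin 2)))
    (hS : ∀ i, ∀ x ∈ S i, ∀ y ∈ S i, dist x y ≠ 1)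
    (hcover : ∀ x, ∃ s : Finset ι, s.card = m ∧ ∀ i ∈ s, x ∈ S i) :
    MfoldColorable m (Fintype.card ι) := by
  choose s hcard hmem using hcover
  let e := Fintype.equivFin ι
  refine ⟨fun x => (s x).map e.toEmbedding, fun x => by simp [hcard], fun x y hxy => ?_⟩
  rw [Finset.disjoint_left]
  intro n hx hy
  rw [Finset.mem_map_equiv] at hx hy
  exact hS _ x (hmem x _ hx) y (hmem y _ hy) hxy

theorem dist_ne_of_mem_add {E : Type*} [SeminormedAddCommGroup E] {L B : Set E} {d : ℝ}
    (hB : ∀ b ∈ B, ∀ b' ∈ B, ‖b - b'‖ < d)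
    (hL : ∀ u ∈ L, ∀ v ∈ L, u ≠ v → 2 * d ≤ ‖u - v‖) {x y : E}
    (hx : x ∈ L + B) (hy : y ∈ L + B) : dist x y ≠ d := by
  obtain ⟨u, hu, b, hb, rfl⟩ := hx
  obtain ⟨v, hv, b', hb', rfl⟩ := hy
  rw [dist_eq_norm, add_sub_add_comm]
  by_cases huv : u = v
  · subst huv
    simpa using (hB b hb b' hb').ne
  · have h := norm_sub_norm_le (u - v) (b' - b)
    rw [show u - v - (b' - b) = u - v + (b - b') by abel] at h
    linarith [hL u hu v hv huv, hB b' hb' b hb]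

lemma one_le_sq_add_mul_add_sq {k l : ℤ} (h : k ≠ 0 ∨ l ≠ 0) : 1 ≤ k ^ 2 + k * l + l ^ 2 := by
  rcases h with h | h <;> nlinarith [sq_nonneg (k + l), Int.one_le_abs h, sq_abs k, sq_abs l]

lemma one_sub_sq_sub_mul_add_sq_lt_one {α β : ℝ} (hα₀ : 0 ≤ α) (hα₁ : α < 1) (hβ₀ : 0 ≤ β)
    (hβ₁ : β < 1) (h : α ≠ 0 ∨ β ≠ 0) : (1 - α) ^ 2 + (1 - α) * -β + (-β) ^ 2 < 1 := by
  rcases le_or_gt (α + β) 1 with hle | hlt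
  · rcases h with h | h
    · have := lt_of_le_of_ne hα₀ (Ne.symm h)
      nlinarith [mul_nonneg hβ₀ (by linarith : (0 : ℝ) ≤ 1 - α - β)]
    · have := lt_of_le_of_ne hβ₀ (Ne.symm h)
      nlinarith [mul_nonneg hα₀ (by linarith : (0 : ℝ) ≤ 2 - α)]
  · nlinarith

namespace TriangularLattice

noncomputable def e₁ : EuclideanSpace ℝ (Fin 2) := !₂[1/2, 0]

noncomputable def e₂ : EuclideanSpace ℝ (Fin 2) := !₂[1/4, √3/4]

lemma norm_smul_add_smul_sq (p q : ℝ) :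
    ‖p • e₁ + q • e₂‖ ^ 2 = (p ^ 2 + p * q + q ^ 2) / 4 := by
  rw [EuclideanSpace.norm_sq_eq]
  simp only [e₁, e₂, PiLp.add_apply, PiLp.smul_apply, smul_eq_mul, Real.norm_eq_abs, sq_abs,
    Fin.sum_univ_two, Matrix.cons_val_zero, Matrix.cons_val_one, Matrix.cons_val_fin_one]
  linear_combination (q ^ 2 / 16) * Real.sq_sqrt (show (0 : ℝ) ≤ 3 by norm_num)

lemma exists_smul_add_smul (x : EuclideanSpace ℝ (Fin 2)) :
    ∃ p q : ℝ, p • e₁ + q • e₂ = x := by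
  refine ⟨2 * x 0 - 2 * x 1 / √3, 4 * x 1 / √3, ?_⟩
  have : √3 ≠ 0 := by positivity
  ext i
  fin_cases i
  · simp only [e₁, e₂, Fin.zero_eta, PiLp.add_apply, PiLp.smul_apply, Matrix.cons_val_zero,
      smul_eq_mul]
    field_simp
    ring
  · simp only [e₁, e₂, Fin.mk_one, PiLp.add_apply, PiLp.smul_apply, Matrix.cons_val_one,
      Matrix.cons_val_fin_one, smul_eq_mul, mul_zero, zero_add]
    field_simp

lemma norm_smul_add_smul_eq_half {p q : ℝ} (h : p ^ 2 + p * q + q ^ 2 = 1) :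
    ‖p • e₁ + q • e₂‖ = 1 / 2 := by
  rw [← sq_eq_sq₀ (norm_nonneg _) (by norm_num), norm_smul_add_smul_sq, h]
  norm_num

lemma norm_e₁ : ‖e₁‖ = 1 / 2 := by
  simpa using norm_smul_add_smul_eq_half (p := 1) (q := 0) (by norm_num)

lemma norm_e₂ : ‖e₂‖ = 1 / 2 := by
  simpa using norm_smul_add_smul_eq_half (p := 0) (q := 1) (by norm_num)

lemma norm_e₁_sub_e₂ : ‖e₁ - e₂‖ = 1 / 2 := by
  simpa [sub_eq_add_neg] using norm_smul_add_smul_eq_half (p := 1) (q := -1) (by norm_num)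

def tile : Set (EuclideanSpace ℝ (Fin 2)) := ball 0 (1 / 2) ∪ {e₁, e₂}

lemma smul_add_smul_mem_tile {p q : ℝ} (h : p ^ 2 + p * q + q ^ 2 < 1) :
    p • e₁ + q • e₂ ∈ tile := by
  left
  rw [mem_ball_zero_iff]
  nlinarith [norm_smul_add_smul_sq p q, norm_nonneg (p • e₁ + q • e₂)]

lemma norm_sub_lt_one_of_mem_tile {b b' : EuclideanSpace ℝ (Fin 2)} (hb : b ∈ tile)
    (hb' : b' ∈ tile) : ‖b - b'‖ < 1 := by
  have hle : ∀ c ∈ tile, ‖c‖ ≤ 1 / 2 := by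
    rintro c (hc | rfl | rfl)
    exacts [(mem_ball_zero_iff.1 hc).le, norm_e₁.le, norm_e₂.le]
  rcases hb with hb | hb
  · linarith [norm_sub_le b b', mem_ball_zero_iff.1 hb, hle b' hb']
  rcases hb' with hb' | hb'
  · linarith [norm_sub_le b b', mem_ball_zero_iff.1 hb', hle b (Or.inr hb)]
  rcases hb with rfl | rfl <;> rcases hb' with rfl | rfl
  all_goals norm_num [norm_e₁_sub_e₂, norm_sub_rev e₂ e₁]

def coset (κ : ZMod 4 × ZMod 4) : Set (EuclideanSpace ℝ (Fin 2)) :=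
  {v | ∃ i j : ℤ, ((i : ZMod 4), (j : ZMod 4)) = κ ∧ (i : ℝ) • e₁ + (j : ℝ) • e₂ = v}

lemma two_le_norm_sub_of_mem_coset {κ : ZMod 4 × ZMod 4} {u v : EuclideanSpace ℝ (Fin 2)}
    (hu : u ∈ coset κ) (hv : v ∈ coset κ) (huv : u ≠ v) : 2 ≤ ‖u - v‖ := by
  obtain ⟨i, j, rfl, rfl⟩ := hu
  obtain ⟨i', j', hκ, rfl⟩ := hv
  simp only [Prod.mk.injEq, ZMod.intCast_eq_intCast_iff_dvd_sub] at hκ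
  obtain ⟨⟨k, hk⟩, ⟨l, hl⟩⟩ := hκ
  have hdiff : (i : ℝ) • e₁ + (j : ℝ) • e₂ - ((i' : ℝ) • e₁ + (j' : ℝ) • e₂)
      = (4 * k : ℝ) • e₁ + (4 * l : ℝ) • e₂ := by
    rw [show i = i' + 4 * k by omega, show j = j' + 4 * l by omega]
    push_cast
    module
  have hkl : k ≠ 0 ∨ l ≠ 0 := by
    by_contra! h
    obtain ⟨rfl, rfl⟩ := h
    obtain ⟨rfl, rfl⟩ : i = i' ∧ j = j' := by omega
    exact huv rfl
  have hQ : (1 : ℝ) ≤ k ^ 2 + k * l + l ^ 2 := by exact_mod_cast one_le_sq_add_mul_add_sq hkl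
  have hsq := norm_smul_add_smul_sq (4 * k) (4 * l)
  rw [← hdiff] at hsq
  nlinarith [norm_nonneg ((i : ℝ) • e₁ + (j : ℝ) • e₂ - ((i' : ℝ) • e₁ + (j' : ℝ) • e₂))]

def colorClass (κ : ZMod 4 × ZMod 4) : Set (EuclideanSpace ℝ (Fin 2)) := coset κ + tile

lemma dist_ne_one_of_mem_colorClass (κ : ZMod 4 × ZMod 4) :
    ∀ x ∈ colorClass κ, ∀ y ∈ colorClass κ, dist x y ≠ 1 := fun _ hx _ hy =>
  dist_ne_of_mem_add (fun _ hb _ hb' => norm_sub_lt_one_of_mem_tile hb hb')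
    (fun _ hu _ hv huv => by linarith [two_le_norm_sub_of_mem_coset hu hv huv]) hx hy

lemma add_smul_add_smul_mem_colorClass (i j : ℤ) {p q : ℝ} (h : p • e₁ + q • e₂ ∈ tile) :
    ((i : ℝ) + p) • e₁ + ((j : ℝ) + q) • e₂ ∈ colorClass ((i : ZMod 4), (j : ZMod 4)) :=
  ⟨_, ⟨i, j, rfl, rfl⟩, _, h, by module⟩

lemma one_sub_smul_add_neg_smul_mem_tile {α β : ℝ} (hα₀ : 0 ≤ α) (hα₁ : α < 1) (hβ₀ : 0 ≤ β)
    (hβ₁ : β < 1) : (1 - α) • e₁ + (-β) • e₂ ∈ tile := by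
  by_cases h : α = 0 ∧ β = 0
  · obtain ⟨rfl, rfl⟩ := h
    simp [tile]
  · exact smul_add_smul_mem_tile
      (one_sub_sq_sub_mul_add_sq_lt_one hα₀ hα₁ hβ₀ hβ₁ (not_and_or.1 h))

lemma neg_smul_add_one_sub_smul_mem_tile {α β : ℝ} (hα₀ : 0 ≤ α) (hα₁ : α < 1) (hβ₀ : 0 ≤ β)
    (hβ₁ : β < 1) : (-α) • e₁ + (1 - β) • e₂ ∈ tile := by
  by_cases h : α = 0 ∧ β = 0
  · obtain ⟨rfl, rfl⟩ := h
    simp [tile]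
  · refine smul_add_smul_mem_tile ?_
    have := one_sub_sq_sub_mul_add_sq_lt_one hβ₀ hβ₁ hα₀ hα₁ (not_and_or.1 h).symm
    linarith

lemma exists_card_eq_three_mem_colorClass (x : EuclideanSpace ℝ (Fin 2)) :
    ∃ s : Finset (ZMod 4 × ZMod 4), s.card = 3 ∧ ∀ κ ∈ s, x ∈ colorClass κ := by
  obtain ⟨a, b, rfl⟩ := exists_smul_add_smul x
  obtain ⟨I, α, hα₀, hα₁, rfl⟩ : ∃ (I : ℤ) (α : ℝ), 0 ≤ α ∧ α < 1 ∧ a = I - α :=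
    ⟨⌈a⌉, ⌈a⌉ - a, by linarith [Int.le_ceil a], by linarith [Int.ceil_lt_add_one a], by ring⟩
  obtain ⟨J, β, hβ₀, hβ₁, rfl⟩ : ∃ (J : ℤ) (β : ℝ), 0 ≤ β ∧ β < 1 ∧ b = J - β :=
    ⟨⌈b⌉, ⌈b⌉ - b, by linarith [Int.le_ceil b], by linarith [Int.ceil_lt_add_one b], by ring⟩
  have mem : ∀ di dj : ℤ, ((di : ℝ) - α) • e₁ + ((dj : ℝ) - β) • e₂ ∈ tile →
      (I - α) • e₁ + (J - β) • e₂ ∈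
        colorClass (((I - di : ℤ) : ZMod 4), ((J - dj : ℤ) : ZMod 4)) := by
    intro di dj h
    convert add_smul_add_smul_mem_colorClass (I - di) (J - dj) h using 3 <;> push_cast <;> ring
  have h₁₀ := mem 1 0 (by simpa using one_sub_smul_add_neg_smul_mem_tile hα₀ hα₁ hβ₀ hβ₁)
  have h₀₁ := mem 0 1 (by simpa using neg_smul_add_one_sub_smul_mem_tile hα₀ hα₁ hβ₀ hβ₁)
  have hone : (1 : ZMod 4) ≠ 0 := by decide
  simp only [Int.cast_sub, Int.cast_one, sub_zero] at h₁₀ h₀₁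
  rcases le_or_gt (α + β) 1 with hle | hgt
  · have h₀₀ := mem 0 0 (by
      simpa using smul_add_smul_mem_tile (p := -α) (q := -β) (by nlinarith))
    simp only [sub_zero] at h₀₀
    refine ⟨{((I : ZMod 4), (J : ZMod 4)), ((I : ZMod 4) - 1, (J : ZMod 4)),
      ((I : ZMod 4), (J : ZMod 4) - 1)},
      Finset.card_eq_three.2 ⟨_, _, _, ?_, ?_, ?_, rfl⟩, by simp [h₀₀, h₁₀, h₀₁]⟩ <;>
    simp [eq_sub_iff_add_eq, hone]
  · have h₁₁ := mem 1 1 (by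
      simpa using smul_add_smul_mem_tile (p := 1 - α) (q := 1 - β) (by nlinarith))
    simp only [Int.cast_sub, Int.cast_one] at h₁₁
    refine ⟨{((I : ZMod 4) - 1, (J : ZMod 4)), ((I : ZMod 4), (J : ZMod 4) - 1),
      ((I : ZMod 4) - 1, (J : ZMod 4) - 1)},
      Finset.card_eq_three.2 ⟨_, _, _, ?_, ?_, ?_, rfl⟩, by simp [h₁₀, h₀₁, h₁₁]⟩ <;>
    simp [eq_sub_iff_add_eq, hone]

end TriangularLattice

open TriangularLattice in
theorem chi_3_le_16 :
    MfoldColorable 3 16 ∧ multifoldChromaticNumber 3 ≤ 16 := by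
  have h : MfoldColorable 3 (Fintype.card (ZMod 4 × ZMod 4)) :=
    mfoldColorable_of_cover colorClass dist_ne_one_of_mem_colorClass
      exists_card_eq_three_mem_colorClass
  have h16 : MfoldColorable 3 16 := h
  exact ⟨h16, Nat.sInf_le h16⟩
end

section
/- There exists a 7-fold 36-coloring of the plane; that is, the 7-fold chromatic number of the plane satisfies χ_7 ≤ 36. -/
namespace Chi736

def tb : Nat → Nat → List (ℤ × ℤ)
  | 0, 0 => [(0, 0), (-10, 0), (-10, 10), (0, -10), (0, 10), (10, -10), (10, 0)]
  | 0, 1 => [(0, 1), (0, -9), (-10, 1), (10, -9), (-10, 11), (10, 1), (0, 11)]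
  | 0, 2 => [(0, 2), (0, -8), (-10, 2), (10, -8), (-10, 12), (10, 2), (0, 12)]
  | 0, 3 => [(0, 3), (0, -7), (-10, 3), (10, -7), (-10, 13), (10, 3), (0, 13)]
  | 0, 4 => [(0, 4), (0, -6), (-10, 4), (10, -6), (-10, 14), (10, 4), (-10, -6)]
  | 0, 5 => [(0, -5), (0, 5), (-10, 5), (10, -5), (-10, -5), (-10, 15), (10, -15)]
  | 0, 6 => [(0, -4), (0, 6), (-10, 6), (10, -4), (-10, -4), (10, -14), (-10, 16)]
  | 0, 7 => [(0, -3), (0, 7), (-10, 7), (10, -3), (-10, -3), (10, -13), (0, -13)]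
  | 0, 8 => [(0, -2), (0, 8), (-10, 8), (10, -2), (-10, -2), (10, -12), (0, -12)]
  | 0, 9 => [(0, -1), (0, 9), (-10, 9), (10, -1), (-10, -1), (10, -11), (0, -11)]
  | 1, 0 => [(1, 0), (-9, 0), (-9, 10), (1, -10), (1, 10), (11, -10), (11, 0)]
  | 1, 1 => [(1, 1), (-9, 1), (1, -9), (-9, 11), (11, -9), (1, 11), (11, 1)]
  | 1, 2 => [(1, 2), (1, -8), (-9, 2), (11, -8), (-9, 12), (11, 2), (1, 12)]
  | 1, 3 => [(1, 3), (1, -7), (-9, 3), (11, -7), (-9, 13), (11, 3), (1, 13)]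
  | 1, 4 => [(1, 4), (1, -6), (-9, 4), (11, -6), (-9, 14), (-9, -6), (11, 4)]
  | 1, 5 => [(1, -5), (1, 5), (-9, 5), (11, -5), (-9, -5), (-9, 15), (11, -15)]
  | 1, 6 => [(1, -4), (1, 6), (-9, 6), (11, -4), (-9, -4), (11, -14), (-9, 16)]
  | 1, 7 => [(1, -3), (1, 7), (-9, 7), (11, -3), (-9, -3), (11, -13), (1, -13)]
  | 1, 8 => [(1, -2), (-9, 8), (1, 8), (-9, -2), (11, -2), (1, -12), (11, -12)]
  | 1, 9 => [(1, -1), (-9, 9), (-9, -1), (1, 9), (1, -11), (11, -1), (11, -11)]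
  | 2, 0 => [(2, 0), (-8, 0), (-8, 10), (2, -10), (2, 10), (12, -10), (12, 0)]
  | 2, 1 => [(2, 1), (-8, 1), (2, -9), (-8, 11), (12, -9), (2, 11), (12, 1)]
  | 2, 2 => [(2, 2), (-8, 2), (2, -8), (-8, 12), (12, -8), (2, 12), (12, 2)]
  | 2, 3 => [(2, 3), (2, -7), (-8, 3), (12, -7), (-8, 13), (-8, -7), (2, 13)]
  | 2, 4 => [(2, -6), (2, 4), (-8, 4), (12, -6), (-8, -6), (-8, 14), (12, -16)]
  | 2, 5 => [(2, -5), (2, 5), (-8, 5), (12, -5), (-8, -5), (-8, 15), (12, -15)]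
  | 2, 6 => [(2, -4), (-8, 6), (2, 6), (-8, -4), (12, -4), (2, -14), (12, -14)]
  | 2, 7 => [(2, -3), (-8, 7), (2, 7), (-8, -3), (12, -3), (2, -13), (12, -13)]
  | 2, 8 => [(2, -2), (-8, 8), (-8, -2), (2, 8), (2, -12), (12, -2), (12, -12)]
  | 2, 9 => [(2, -1), (-8, -1), (-8, 9), (2, -11), (2, 9), (12, -11), (12, -1)]
  | 3, 0 => [(3, 0), (-7, 0), (-7, 10), (3, -10), (3, 10), (13, -10), (13, 0)]
  | 3, 1 => [(3, 1), (-7, 1), (3, -9), (-7, 11), (13, -9), (3, 11), (-7, -9)]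
  | 3, 2 => [(3, 2), (-7, 2), (3, -8), (-7, 12), (13, -8), (-7, -8), (3, 12)]
  | 3, 3 => [(3, 3), (-7, 3), (3, -7), (-7, 13), (13, -7), (-7, -7), (3, 13)]
  | 3, 4 => [(3, -6), (-7, 4), (3, 4), (-7, -6), (13, -6), (-7, 14), (13, -16)]
  | 3, 5 => [(3, -5), (-7, 5), (3, 5), (-7, -5), (13, -5), (-7, 15), (13, -15)]
  | 3, 6 => [(3, -4), (-7, 6), (3, 6), (-7, -4), (13, -4), (3, -14), (13, -14)]
  | 3, 7 => [(3, -3), (-7, 7), (-7, -3), (3, 7), (3, -13), (13, -3), (13, -13)]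
  | 3, 8 => [(3, -2), (-7, 8), (-7, -2), (3, 8), (3, -12), (13, -2), (13, -12)]
  | 3, 9 => [(3, -1), (-7, -1), (-7, 9), (3, -11), (3, 9), (13, -11), (13, -1)]
  | 4, 0 => [(4, 0), (-6, 0), (-6, 10), (4, -10), (4, 10), (14, -10), (-16, 10)]
  | 4, 1 => [(4, 1), (-6, 1), (4, -9), (-6, 11), (14, -9), (-6, -9), (4, 11)]
  | 4, 2 => [(-6, 2), (4, 2), (4, -8), (-6, 12), (-6, -8), (14, -8), (4, 12)]
  | 4, 3 => [(-6, 3), (4, -7), (4, 3), (-6, -7), (-6, 13), (14, -7), (-16, 3)]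
  | 4, 4 => [(-6, 4), (4, -6), (4, 4), (-6, -6), (-6, 14), (14, -6), (-16, 4)]
  | 4, 5 => [(4, -5), (-6, 5), (4, 5), (-6, -5), (14, -5), (-6, 15), (4, -15)]
  | 4, 6 => [(4, -4), (-6, 6), (-6, -4), (4, 6), (4, -14), (14, -4), (-16, 6)]
  | 4, 7 => [(4, -3), (-6, 7), (-6, -3), (4, 7), (4, -13), (14, -3), (14, -13)]
  | 4, 8 => [(4, -2), (-6, -2), (-6, 8), (4, -12), (4, 8), (14, -12), (14, -2)]
  | 4, 9 => [(4, -1), (-6, -1), (-6, 9), (4, -11), (4, 9), (14, -11), (-16, 9)]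
  | 5, 0 => [(-5, 0), (5, 0), (-5, 10), (5, -10), (-15, 10), (-5, -10), (5, 10)]
  | 5, 1 => [(-5, 1), (5, 1), (5, -9), (-5, 11), (-5, -9), (15, -9), (-15, 11)]
  | 5, 2 => [(-5, 2), (5, 2), (5, -8), (-5, 12), (-5, -8), (15, -8), (-15, 2)]
  | 5, 3 => [(-5, 3), (5, -7), (5, 3), (-5, -7), (-5, 13), (15, -7), (-15, 3)]
  | 5, 4 => [(-5, 4), (5, -6), (5, 4), (-5, -6), (-5, 14), (15, -6), (-15, 4)]
  | 5, 5 => [(-5, 5), (5, -5), (-5, -5), (5, 5), (-15, 5), (-5, 15), (5, -15)]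
  | 5, 6 => [(5, -4), (-5, 6), (-5, -4), (5, 6), (5, -14), (-15, 6), (15, -4)]
  | 5, 7 => [(5, -3), (-5, 7), (-5, -3), (5, 7), (5, -13), (-15, 7), (15, -13)]
  | 5, 8 => [(5, -2), (-5, -2), (-5, 8), (5, -12), (5, 8), (-15, 8), (15, -12)]
  | 5, 9 => [(5, -1), (-5, -1), (-5, 9), (5, -11), (5, 9), (-15, 9), (15, -11)]
  | 6, 0 => [(-4, 0), (6, 0), (-4, 10), (6, -10), (-14, 10), (-4, -10), (-14, 0)]
  | 6, 1 => [(-4, 1), (6, 1), (6, -9), (-4, 11), (-4, -9), (-14, 11), (-14, 1)]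
  | 6, 2 => [(-4, 2), (6, -8), (6, 2), (-4, -8), (-4, 12), (-14, 2), (-14, 12)]
  | 6, 3 => [(-4, 3), (6, -7), (6, 3), (-4, -7), (-4, 13), (-14, 3), (16, -7)]
  | 6, 4 => [(-4, 4), (6, -6), (-4, -6), (6, 4), (-14, 4), (-4, 14), (6, -16)]
  | 6, 5 => [(-4, 5), (6, -5), (-4, -5), (6, 5), (-14, 5), (6, -15), (-4, 15)]
  | 6, 6 => [(-4, 6), (6, -4), (-4, -4), (6, 6), (-14, 6), (6, -14), (-4, 16)]
  | 6, 7 => [(6, -3), (-4, -3), (-4, 7), (6, -13), (6, 7), (-14, 7), (16, -13)]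
  | 6, 8 => [(-4, -2), (6, -2), (-4, 8), (6, -12), (-14, 8), (6, 8), (16, -12)]
  | 6, 9 => [(-4, -1), (6, -1), (-4, 9), (6, -11), (-14, 9), (6, 9), (-4, -11)]
  | 7, 0 => [(-3, 0), (7, 0), (-3, 10), (7, -10), (-13, 10), (-3, -10), (-13, 0)]
  | 7, 1 => [(-3, 1), (7, 1), (7, -9), (-3, 11), (-3, -9), (-13, 11), (-13, 1)]
  | 7, 2 => [(-3, 2), (7, -8), (7, 2), (-3, -8), (-3, 12), (-13, 2), (-13, 12)]
  | 7, 3 => [(-3, 3), (7, -7), (-3, -7), (7, 3), (-13, 3), (-3, 13), (-13, 13)]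
  | 7, 4 => [(-3, 4), (7, -6), (-3, -6), (7, 4), (-13, 4), (-3, 14), (7, -16)]
  | 7, 5 => [(-3, 5), (7, -5), (-3, -5), (7, 5), (-13, 5), (7, -15), (-3, 15)]
  | 7, 6 => [(-3, 6), (-3, -4), (7, -4), (-13, 6), (7, 6), (7, -14), (-3, 16)]
  | 7, 7 => [(-3, -3), (-3, 7), (7, -3), (-13, 7), (7, -13), (7, 7), (-13, -3)]
  | 7, 8 => [(-3, -2), (7, -2), (-3, 8), (7, -12), (-13, 8), (7, 8), (-13, -2)]
  | 7, 9 => [(-3, -1), (7, -1), (-3, 9), (7, -11), (-13, 9), (-3, -11), (-13, -1)]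
  | 8, 0 => [(-2, 0), (8, 0), (-2, 10), (8, -10), (-12, 10), (-2, -10), (-12, 0)]
  | 8, 1 => [(-2, 1), (8, -9), (8, 1), (-2, -9), (-2, 11), (-12, 1), (-12, 11)]
  | 8, 2 => [(-2, 2), (8, -8), (-2, -8), (8, 2), (-12, 2), (-2, 12), (-12, 12)]
  | 8, 3 => [(-2, 3), (8, -7), (-2, -7), (8, 3), (-12, 3), (-2, 13), (-12, 13)]
  | 8, 4 => [(-2, 4), (-2, -6), (8, -6), (-12, 4), (8, 4), (-12, 14), (-2, 14)]
  | 8, 5 => [(-2, 5), (-2, -5), (8, -5), (-12, 5), (8, 5), (8, -15), (-2, 15)]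
  | 8, 6 => [(-2, -4), (-2, 6), (8, -4), (-12, 6), (8, -14), (8, 6), (-12, -4)]
  | 8, 7 => [(-2, -3), (-2, 7), (8, -3), (-12, 7), (8, -13), (8, 7), (-12, -3)]
  | 8, 8 => [(-2, -2), (-2, 8), (8, -2), (-12, 8), (8, -12), (-12, -2), (-2, -12)]
  | 8, 9 => [(-2, -1), (8, -1), (-2, 9), (8, -11), (-12, 9), (-2, -11), (-12, -1)]
  | 9, 0 => [(-1, 0), (9, 0), (-1, 10), (9, -10), (-11, 10), (-1, -10), (-11, 0)]
  | 9, 1 => [(-1, 1), (9, -9), (-1, -9), (9, 1), (-11, 1), (-1, 11), (-11, 11)]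
  | 9, 2 => [(-1, 2), (-1, -8), (9, -8), (-11, 2), (9, 2), (-11, 12), (-1, 12)]
  | 9, 3 => [(-1, 3), (-1, -7), (9, -7), (-11, 3), (9, 3), (-11, 13), (-1, 13)]
  | 9, 4 => [(-1, 4), (-1, -6), (9, -6), (-11, 4), (9, 4), (-11, 14), (-1, 14)]
  | 9, 5 => [(-1, 5), (-1, -5), (9, -5), (-11, 5), (9, 5), (9, -15), (-11, 15)]
  | 9, 6 => [(-1, -4), (-1, 6), (9, -4), (-11, 6), (9, -14), (9, 6), (-11, -4)]
  | 9, 7 => [(-1, -3), (-1, 7), (9, -3), (-11, 7), (9, -13), (-11, -3), (9, 7)]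
  | 9, 8 => [(-1, -2), (-1, 8), (9, -2), (-11, 8), (9, -12), (-11, -2), (-1, -12)]
  | 9, 9 => [(-1, -1), (-1, 9), (9, -1), (-11, 9), (9, -11), (-11, -1), (-1, -11)]
  | _, _ => []

lemma tb_facts : ∀ r1 r2 : Fin 10, (tb r1.val r2.val).length = 7 ∧ (tb r1.val r2.val).Nodup ∧
    ∀ tp ∈ tb r1.val r2.val, tp.1 % 10 = (r1.val : ℤ) ∧ tp.2 % 10 = (r2.val : ℤ) ∧
      -29 ≤ 2*tp.1+tp.2 ∧ 2*tp.1+tp.2 ≤ 26 ∧ -26 ≤ tp.1+2*tp.2 ∧ tp.1+2*tp.2 ≤ 29 ∧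
      -26 ≤ tp.1-tp.2 ∧ tp.1-tp.2 ≤ 29 ∧ tp.1*tp.1+tp.1*tp.2+tp.2*tp.2 ≤ 226 := by decide

noncomputable section
open Classical

/-- scale of the fine hexagonal lattice -/
def tc : ℝ := 4/125

def s3 : ℝ := Real.sqrt 3

lemma s3_pos : 0 < s3 := Real.sqrt_pos.mpr (by norm_num)
lemma s3_sq : s3^2 = 3 := Real.sq_sqrt (by norm_num)
lemma tc_pos : (0:ℝ) < tc := by norm_num [tc]

/-- lattice coordinates of a point -/
def Af (x : EuclideanSpace ℝ (Fin 2)) : ℝ := x 0 / tc - x 1 / (s3 * tc)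
def Bf (x : EuclideanSpace ℝ (Fin 2)) : ℝ := 2 * x 1 / (s3 * tc)

lemma coordA (x : EuclideanSpace ℝ (Fin 2)) : x 0 = tc * (Af x + Bf x / 2) := by
  have h1 : s3 ≠ 0 := ne_of_gt s3_pos
  have h2 : tc ≠ 0 := ne_of_gt tc_pos
  unfold Af Bf; field_simp; ring

lemma coordB (x : EuclideanSpace ℝ (Fin 2)) : x 1 = tc * Bf x * s3 / 2 := by
  have h1 : s3 ≠ 0 := ne_of_gt s3_pos
  have h2 : tc ≠ 0 := ne_of_gt tc_pos
  unfold Bf; field_simp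

/-- corner selection inside a fundamental cell -/
def sel (g e : ℝ) : ℤ × ℤ :=
  if 2*g+e ≤ 1 ∧ g+2*e ≤ 1 then (0,0)
  else if 2 ≤ 2*g+e ∧ 2 ≤ g+2*e then (1,1)
  else if e ≤ g then (1,0) else (0,1)

/-- tile (hexagonal cell) index of a point -/
def tile (x : EuclideanSpace ℝ (Fin 2)) : ℤ × ℤ :=
  (⌊Af x⌋ + (sel (Int.fract (Af x)) (Int.fract (Bf x))).1,
   ⌊Bf x⌋ + (sel (Int.fract (Af x)) (Int.fract (Bf x))).2)

/-- bounds for the corner selection -/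
lemma sel_bounds (g e : ℝ) (hg0 : 0 ≤ g) (hg1 : g < 1) (he0 : 0 ≤ e) (he1 : e < 1) :
    -1 ≤ 2*(g - ((sel g e).1:ℝ)) + (e - ((sel g e).2:ℝ)) ∧
    2*(g - ((sel g e).1:ℝ)) + (e - ((sel g e).2:ℝ)) ≤ 1 ∧
    -1 ≤ (g - ((sel g e).1:ℝ)) + 2*(e - ((sel g e).2:ℝ)) ∧
    (g - ((sel g e).1:ℝ)) + 2*(e - ((sel g e).2:ℝ)) ≤ 1 ∧
    -1 ≤ (g - ((sel g e).1:ℝ)) - (e - ((sel g e).2:ℝ)) ∧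
    (g - ((sel g e).1:ℝ)) - (e - ((sel g e).2:ℝ)) ≤ 1 := by
  unfold sel
  split_ifs with h1 h2 h3
  · obtain ⟨ha, hb⟩ := h1
    push_cast
    refine ⟨by linarith, by linarith, by linarith, by linarith, by linarith, by linarith⟩
  · obtain ⟨ha, hb⟩ := h2
    push_cast
    refine ⟨by linarith, by linarith, by linarith, by linarith, by linarith, by linarith⟩
  · push_neg at h1 h2
    have k1 : 1 ≤ 2*g+e := by
      rcases le_or_gt (2*g+e) 1 with h | h
      · have := h1 h; linarith
      · linarith
    have k2 : g+2*e ≤ 2 := by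
      rcases le_or_gt 2 (2*g+e) with h | h
      · have := h2 h; linarith
      · linarith
    push_cast
    refine ⟨by linarith, by linarith, by linarith, by linarith, by linarith, by linarith⟩
  · push_neg at h1 h2 h3
    have k1 : 1 ≤ g+2*e := by
      rcases le_or_gt (g+2*e) 1 with h | h
      · have h' : 2*g+e ≤ 1 := by linarith
        have := h1 h'; linarith
      · linarith
    have k2 : 2*g+e ≤ 2 := by
      rcases le_or_gt 2 (g+2*e) with h | h
      · by_contra hcon
        push_neg at hcon
        have := h2 (by linarith); linarith
      · linarith
    push_cast
    refine ⟨by linarith, by linarith, by linarith, by linarith, by linarith, by linarith⟩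

/-- the deviation of a point from its tile center is small in all three hexagonal forms -/
lemma dev_bound (x : EuclideanSpace ℝ (Fin 2)) :
    -1 ≤ 2*(Af x - ((tile x).1:ℝ)) + (Bf x - ((tile x).2:ℝ)) ∧
    2*(Af x - ((tile x).1:ℝ)) + (Bf x - ((tile x).2:ℝ)) ≤ 1 ∧
    -1 ≤ (Af x - ((tile x).1:ℝ)) + 2*(Bf x - ((tile x).2:ℝ)) ∧
    (Af x - ((tile x).1:ℝ)) + 2*(Bf x - ((tile x).2:ℝ)) ≤ 1 ∧
    -1 ≤ (Af x - ((tile x).1:ℝ)) - (Bf x - ((tile x).2:ℝ)) ∧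
    (Af x - ((tile x).1:ℝ)) - (Bf x - ((tile x).2:ℝ)) ≤ 1 := by
  have hA : Af x - ((tile x).1:ℝ)
      = Int.fract (Af x) - ((sel (Int.fract (Af x)) (Int.fract (Bf x))).1 : ℝ) := by
    unfold tile
    push_cast
    simp only [Int.fract]
    ring
  have hB : Bf x - ((tile x).2:ℝ)
      = Int.fract (Bf x) - ((sel (Int.fract (Af x)) (Int.fract (Bf x))).2 : ℝ) := by
    unfold tile
    push_cast
    simp only [Int.fract]
    ring
  rw [hA, hB]
  exact sel_bounds _ _ (Int.fract_nonneg _) (Int.fract_lt_one _)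
    (Int.fract_nonneg _) (Int.fract_lt_one _)

/-- hexagon bound: the quadratic form is at most 1/3 on the unit hexagon -/
lemma hex_bound (s e : ℝ) (h1 : -1 ≤ 2*s+e) (h2 : 2*s+e ≤ 1) (h3 : -1 ≤ s+2*e)
    (h4 : s+2*e ≤ 1) (h5 : -1 ≤ s-e) (h6 : s-e ≤ 1) : s^2 + s*e + e^2 ≤ 1/3 := by
  set f1 := 2*s+e with hf1
  set f2 := s+2*e with hf2
  have key : 3*(s^2+s*e+e^2) = f1^2 + f2^2 - f1*f2 := by rw [hf1, hf2]; ring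
  have hd : f1 - f2 = s - e := by rw [hf1, hf2]; ring
  rcases le_total 0 f1 with hs1 | hs1 <;> rcases le_total 0 f2 with hs2 | hs2
  · nlinarith [mul_nonneg (by linarith : (0:ℝ) ≤ 1 - f1) (by linarith : (0:ℝ) ≤ 1 - f2),
      mul_nonneg (by linarith : (0:ℝ) ≤ 1 - f1) hs1,
      mul_nonneg (by linarith : (0:ℝ) ≤ 1 - f2) hs2]
  · nlinarith [mul_nonpos_of_nonneg_of_nonpos hs1 hs2, sq_nonneg (f1 - f2)]
  · nlinarith [mul_nonpos_of_nonpos_of_nonneg hs1 hs2, sq_nonneg (f1 - f2)]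
  · nlinarith [mul_nonneg (by linarith : (0:ℝ) ≤ 1 + f1) (by linarith : (0:ℝ) ≤ 1 + f2),
      mul_nonneg (by linarith : (0:ℝ) ≤ 1 + f1) (by linarith : (0:ℝ) ≤ -f1),
      mul_nonneg (by linarith : (0:ℝ) ≤ 1 + f2) (by linarith : (0:ℝ) ≤ -f2)]

/-- color of a tile `u` relative to a table point `tp` -/
def colZ (u tp : ℤ × ℤ) : Fin 36 :=
  ⟨((u.1 - tp.1)/10 % 6).toNat * 6 + ((u.2 - tp.2)/10 % 6).toNat, by
    have h1 : 0 ≤ (u.1 - tp.1)/10 % 6 := Int.emod_nonneg _ (by norm_num)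
    have h2 : (u.1 - tp.1)/10 % 6 < 6 := Int.emod_lt_of_pos _ (by norm_num)
    have h3 : 0 ≤ (u.2 - tp.2)/10 % 6 := Int.emod_nonneg _ (by norm_num)
    have h4 : (u.2 - tp.2)/10 % 6 < 6 := Int.emod_lt_of_pos _ (by norm_num)
    omega⟩

def tlist (u : ℤ × ℤ) : List (ℤ × ℤ) := tb (u.1 % 10).toNat (u.2 % 10).toNat

def col (x : EuclideanSpace ℝ (Fin 2)) : Finset (Fin 36) :=
  ((tlist (tile x)).map (colZ (tile x))).toFinset

/-- facts about the table entries for the coset of an arbitrary tile -/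
lemma tlist_facts (u : ℤ × ℤ) : (tlist u).length = 7 ∧ (tlist u).Nodup ∧
    ∀ tp ∈ tlist u, tp.1 % 10 = u.1 % 10 ∧ tp.2 % 10 = u.2 % 10 ∧
      -29 ≤ 2*tp.1+tp.2 ∧ 2*tp.1+tp.2 ≤ 26 ∧ -26 ≤ tp.1+2*tp.2 ∧ tp.1+2*tp.2 ≤ 29 ∧
      -26 ≤ tp.1-tp.2 ∧ tp.1-tp.2 ≤ 29 ∧ tp.1*tp.1+tp.1*tp.2+tp.2*tp.2 ≤ 226 := by
  have hb1 : 0 ≤ u.1 % 10 := Int.emod_nonneg _ (by norm_num)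
  have hb2 : u.1 % 10 < 10 := Int.emod_lt_of_pos _ (by norm_num)
  have hb3 : 0 ≤ u.2 % 10 := Int.emod_nonneg _ (by norm_num)
  have hb4 : u.2 % 10 < 10 := Int.emod_lt_of_pos _ (by norm_num)
  have hr1 : (u.1 % 10).toNat < 10 := by omega
  have hr2 : (u.2 % 10).toNat < 10 := by omega
  have := tb_facts ⟨(u.1 % 10).toNat, hr1⟩ ⟨(u.2 % 10).toNat, hr2⟩
  obtain ⟨hl, hnd, hmem⟩ := this
  refine ⟨hl, hnd, fun tp htp => ?_⟩
  have := hmem tp htp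
  have hc1 : ((u.1 % 10).toNat : ℤ) = u.1 % 10 := Int.toNat_of_nonneg hb1
  have hc2 : ((u.2 % 10).toNat : ℤ) = u.2 % 10 := Int.toNat_of_nonneg hb3
  simp only [Fin.val_mk] at this
  rw [hc1, hc2] at this
  exact this

/-- colors assigned to one tile are distinct -/
lemma colZ_inj (u : ℤ × ℤ) : ∀ tp ∈ tlist u, ∀ tp' ∈ tlist u,
    colZ u tp = colZ u tp' → tp = tp' := by
  intro tp htp tp' htp' heq
  obtain ⟨-, -, hmem⟩ := tlist_facts u
  obtain ⟨hm1, hm2, hw⟩ := hmem tp htp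
  obtain ⟨hm1', hm2', hw'⟩ := hmem tp' htp'
  have heqv : ((u.1 - tp.1)/10 % 6).toNat * 6 + ((u.2 - tp.2)/10 % 6).toNat
      = ((u.1 - tp'.1)/10 % 6).toNat * 6 + ((u.2 - tp'.2)/10 % 6).toNat := by
    exact congrArg Fin.val heq
  have d1 : tp.1 = tp'.1 := by omega
  have d2 : tp.2 = tp'.2 := by omega
  exact Prod.ext d1 d2

lemma card_col (x : EuclideanSpace ℝ (Fin 2)) : (col x).card = 7 := by
  obtain ⟨hl, hnd, -⟩ := tlist_facts (tile x)
  have hnd2 : ((tlist (tile x)).map (colZ (tile x))).Nodup :=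
    hnd.map_on (fun a ha b hb h => colZ_inj (tile x) a ha b hb h)
  rw [col, List.toFinset_card_of_nodup hnd2, List.length_map, hl]

/-- distance between two points in terms of coordinates -/
lemma dist_sq (x y : EuclideanSpace ℝ (Fin 2)) (h : dist x y = 1) :
    (x 0 - y 0)^2 + (x 1 - y 1)^2 = 1 := by
  have := EuclideanSpace.dist_eq x y
  rw [h] at this
  have h2 : Real.sqrt (∑ i : Fin 2, dist (x i) (y i)^2) = 1 := this.symm
  have h3 : (∑ i : Fin 2, dist (x i) (y i)^2) = 1 := by
    have hnn : (0:ℝ) ≤ ∑ i : Fin 2, dist (x i) (y i)^2 :=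
      Finset.sum_nonneg fun i _ => sq_nonneg _
    nlinarith [Real.sq_sqrt hnn, h2]
  rw [Fin.sum_univ_two, Real.dist_eq, Real.dist_eq, sq_abs, sq_abs] at h3
  exact h3

lemma far_int (t1 t2 q1 q2 m1 m2 d1 d2 : ℤ)
    (ht1 : -29 ≤ 2*t1+t2) (ht2 : 2*t1+t2 ≤ 26) (ht3 : -26 ≤ t1+2*t2) (ht4 : t1+2*t2 ≤ 29)
    (ht5 : -26 ≤ t1-t2) (ht6 : t1-t2 ≤ 29)
    (hq1 : -29 ≤ 2*q1+q2) (hq2 : 2*q1+q2 ≤ 26) (hq3 : -26 ≤ q1+2*q2) (hq4 : q1+2*q2 ≤ 29)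
    (hq5 : -26 ≤ q1-q2) (hq6 : q1-q2 ≤ 29)
    (hm : ¬(m1 = 0 ∧ m2 = 0))
    (hd1 : d1 = t1 - q1 + 60*m1) (hd2 : d2 = t2 - q2 + 60*m2) :
    65 ≤ 2*d1+d2 ∨ 2*d1+d2 ≤ -65 ∨ 65 ≤ d1+2*d2 ∨ d1+2*d2 ≤ -65 ∨
      65 ≤ d1-d2 ∨ d1-d2 ≤ -65 := by
  have hm6 : 2 ≤ 2*m1+m2 ∨ 2*m1+m2 ≤ -2 ∨ 2 ≤ m1+2*m2 ∨ m1+2*m2 ≤ -2 ∨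
      2 ≤ m1-m2 ∨ m1-m2 ≤ -2 := by omega
  rcases hm6 with h | h | h | h | h | h
  · exact Or.inl (by linarith)
  · exact Or.inr (Or.inl (by linarith))
  · exact Or.inr (Or.inr (Or.inl (by linarith)))
  · exact Or.inr (Or.inr (Or.inr (Or.inl (by linarith))))
  · exact Or.inr (Or.inr (Or.inr (Or.inr (Or.inl (by linarith)))))
  · exact Or.inr (Or.inr (Or.inr (Or.inr (Or.inr (by linarith)))))

lemma near_real (E1 E2 aa bb : ℝ)
    (h1 : E1*E1 + E1*E2 + E2*E2 ≤ 904) (h0 : 0 ≤ E1*E1 + E1*E2 + E2*E2)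
    (h2 : aa^2 + aa*bb + bb^2 ≤ 4/3) (h20 : 0 ≤ aa^2 + aa*bb + bb^2)
    (hPQ : (tc*((E1+aa)+(E2+bb)/2))^2 + (tc*((E2+bb))*s3/2)^2 = 1) : False := by
  have hsq : (tc*((E2+bb))*s3/2)^2 = tc^2*(E2+bb)^2*3/4 := by
    have h : (tc*((E2+bb))*s3/2)^2 = tc^2*(E2+bb)^2*s3^2/4 := by ring
    rw [h, s3_sq]
  rw [hsq] at hPQ
  have htc : tc = 4/125 := rfl
  rw [htc] at hPQ
  set B := 2*E1*aa + E1*bb + E2*aa + 2*E2*bb with hB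
  have hBsq : B^2 ≤ 4 * (E1*E1 + E1*E2 + E2*E2) * (aa^2+aa*bb+bb^2) := by
    nlinarith [sq_nonneg (E1*bb - E2*aa)]
  have hBle : B ≤ 1389/20 := by
    nlinarith [sq_nonneg (B - 1389/20), hBsq, h1, h2, h0, h20]
  nlinarith [hPQ, hBle, h1, h2]

lemma far_real (P Q F G : ℝ) (hPQ : P^2 + Q^2 = 1)
    (hF : 65 ≤ F ∨ F ≤ -65) (hG1 : -2 ≤ G) (hG2 : G ≤ 2)
    (hform : 2*P = tc*(F+G) ∨ P + s3*Q = tc*(F+G) ∨ P - s3*Q = tc*(F+G)) : False := by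
  have htc : tc = 4/125 := rfl
  have habs : (tc*(F+G))^2 ≥ (252/125)^2 := by
    rw [htc]
    rcases hF with h | h
    · nlinarith
    · nlinarith
  rcases hform with h | h | h
  · rw [← h] at habs
    nlinarith [sq_nonneg Q]
  · have hCS : (P + s3*Q)^2 ≤ 4 := by
      nlinarith [sq_nonneg (s3*P - Q), s3_sq]
    rw [← h] at habs
    nlinarith
  · have hCS : (P - s3*Q)^2 ≤ 4 := by
      nlinarith [sq_nonneg (s3*P + Q), s3_sq]
    rw [← h] at habs
    nlinarith

set_option maxHeartbeats 1000000 in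
/-- Main disjointness result -/
lemma col_disj (x y : EuclideanSpace ℝ (Fin 2)) (hd : dist x y = 1) :
    Disjoint (col x) (col y) := by
  rw [Finset.disjoint_left]
  intro gcol hgx hgy
  simp only [col, List.mem_toFinset, List.mem_map] at hgx hgy
  obtain ⟨tp, htp, hcx⟩ := hgx
  obtain ⟨tq, htq, hcy⟩ := hgy
  set u := tile x with hu
  set v := tile y with hv
  obtain ⟨-, -, hmemx⟩ := tlist_facts u
  obtain ⟨-, -, hmemy⟩ := tlist_facts v
  obtain ⟨hp1, hp2, hpw1, hpw2, hpw3, hpw4, hpw5, hpw6, hpq⟩ := hmemx tp htp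
  obtain ⟨hq1, hq2, hqw1, hqw2, hqw3, hqw4, hqw5, hqw6, hqq⟩ := hmemy tq htq
  -- color equality as integers
  have hceq : ((u.1 - tp.1)/10 % 6).toNat * 6 + ((u.2 - tp.2)/10 % 6).toNat
      = ((v.1 - tq.1)/10 % 6).toNat * 6 + ((v.2 - tq.2)/10 % 6).toNat := by
    have : colZ u tp = colZ v tq := hcx.trans hcy.symm
    exact congrArg Fin.val this
  -- divisibility facts
  have hA1b : 0 ≤ (u.1 - tp.1)/10 % 6 := Int.emod_nonneg _ (by norm_num)
  have hA1c : (u.1 - tp.1)/10 % 6 < 6 := Int.emod_lt_of_pos _ (by norm_num)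
  have hB1b : 0 ≤ (u.2 - tp.2)/10 % 6 := Int.emod_nonneg _ (by norm_num)
  have hB1c : (u.2 - tp.2)/10 % 6 < 6 := Int.emod_lt_of_pos _ (by norm_num)
  have hA2b : 0 ≤ (v.1 - tq.1)/10 % 6 := Int.emod_nonneg _ (by norm_num)
  have hA2c : (v.1 - tq.1)/10 % 6 < 6 := Int.emod_lt_of_pos _ (by norm_num)
  have hB2b : 0 ≤ (v.2 - tq.2)/10 % 6 := Int.emod_nonneg _ (by norm_num)
  have hB2c : (v.2 - tq.2)/10 % 6 < 6 := Int.emod_lt_of_pos _ (by norm_num)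
  have hceqZ : ((u.1 - tp.1)/10 % 6) * 6 + ((u.2 - tp.2)/10 % 6)
      = ((v.1 - tq.1)/10 % 6) * 6 + ((v.2 - tq.2)/10 % 6) := by
    have hcast : (((u.1 - tp.1)/10 % 6).toNat * 6 + ((u.2 - tp.2)/10 % 6).toNat : ℤ)
        = (((v.1 - tq.1)/10 % 6).toNat * 6 + ((v.2 - tq.2)/10 % 6).toNat : ℤ) := by
      exact_mod_cast hceq
    rw [Int.toNat_of_nonneg hA1b, Int.toNat_of_nonneg hB1b,
        Int.toNat_of_nonneg hA2b, Int.toNat_of_nonneg hB2b] at hcast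
    exact hcast
  have hmod1 : (u.1 - tp.1)/10 % 6 = (v.1 - tq.1)/10 % 6 := by omega
  have hmod2 : (u.2 - tp.2)/10 % 6 = (v.2 - tq.2)/10 % 6 := by omega
  have h60a : (60:ℤ) ∣ ((u.1 - tp.1) - (v.1 - tq.1)) := by omega
  have h60b : (60:ℤ) ∣ ((u.2 - tp.2) - (v.2 - tq.2)) := by omega
  clear hceq hceqZ hmod1 hmod2 hA1b hA1c hB1b hB1c hA2b hA2c hB2b hB2c hcx hcy
  -- geometry setup
  set sx := Af x - (u.1:ℝ) with hsx
  set txv := Bf x - (u.2:ℝ) with htxv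
  set sy := Af y - (v.1:ℝ) with hsy
  set tyv := Bf y - (v.2:ℝ) with htyv
  obtain ⟨dx1, dx2, dx3, dx4, dx5, dx6⟩ := dev_bound x
  obtain ⟨dy1, dy2, dy3, dy4, dy5, dy6⟩ := dev_bound y
  rw [← hu] at dx1 dx2 dx3 dx4 dx5 dx6
  rw [← hv] at dy1 dy2 dy3 dy4 dy5 dy6
  rw [← hsx, ← htxv] at dx1 dx2 dx3 dx4 dx5 dx6
  rw [← hsy, ← htyv] at dy1 dy2 dy3 dy4 dy5 dy6
  have hPQ := dist_sq x y hd
  set d1 : ℤ := u.1 - v.1 with hd1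
  set d2 : ℤ := u.2 - v.2 with hd2
  have hP : x 0 - y 0 = tc * (((d1:ℝ) + (sx - sy)) + ((d2:ℝ) + (txv - tyv))/2) := by
    rw [coordA x, coordA y]
    have e1 : Af x = sx + (u.1:ℝ) := by rw [hsx]; ring
    have e2 : Bf x = txv + (u.2:ℝ) := by rw [htxv]; ring
    have e3 : Af y = sy + (v.1:ℝ) := by rw [hsy]; ring
    have e4 : Bf y = tyv + (v.2:ℝ) := by rw [htyv]; ring
    rw [e1, e2, e3, e4, hd1, hd2]; push_cast; ring
  have hQ : x 1 - y 1 = tc * ((d2:ℝ) + (txv - tyv)) * s3 / 2 := by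
    rw [coordB x, coordB y]
    have e2 : Bf x = txv + (u.2:ℝ) := by rw [htxv]; ring
    have e4 : Bf y = tyv + (v.2:ℝ) := by rw [htyv]; ring
    rw [e2, e4, hd2]; push_cast; ring
  set a := sx - sy with ha
  set b := txv - tyv with hb
  by_cases hz : (u.1 - tp.1) - (v.1 - tq.1) = 0 ∧ (u.2 - tp.2) - (v.2 - tq.2) = 0
  · -- NEAR case : d = tp - tq, small
    have hd1v : d1 = tp.1 - tq.1 := by omega
    have hd2v : d2 = tp.2 - tq.2 := by omega
    have hnd : (d1*d1 + d1*d2 + d2*d2 : ℤ) ≤ 904 := by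
      rw [hd1v, hd2v]
      nlinarith [sq_nonneg (2*(tp.1+tq.1) + (tp.2+tq.2)), sq_nonneg (tp.2+tq.2), hpq, hqq]
    have hndR : ((d1:ℝ)*d1 + d1*d2 + d2*d2) ≤ 904 := by exact_mod_cast hnd
    have hndR0 : (0:ℝ) ≤ ((d1:ℝ)*d1 + d1*d2 + d2*d2) := by
      have : (0:ℤ) ≤ d1*d1 + d1*d2 + d2*d2 := by nlinarith [sq_nonneg (2*d1+d2), sq_nonneg d2]
      exact_mod_cast this
    have hxhex : sx^2 + sx*txv + txv^2 ≤ 1/3 := hex_bound sx txv dx1 dx2 dx3 dx4 dx5 dx6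
    have hyhex : sy^2 + sy*tyv + tyv^2 ≤ 1/3 := hex_bound sy tyv dy1 dy2 dy3 dy4 dy5 dy6
    have hab : a^2 + a*b + b^2 ≤ 4/3 := by
      rw [ha, hb]
      nlinarith [sq_nonneg (2*(sx+sy)+(txv+tyv)), sq_nonneg (txv+tyv)]
    have hab0 : (0:ℝ) ≤ a^2 + a*b + b^2 := by nlinarith [sq_nonneg (2*a+b), sq_nonneg b]
    -- conclude by the pure real lemma
    have hPQ2 : (tc*(((d1:ℝ)+a)+((d2:ℝ)+b)/2))^2 + (tc*(((d2:ℝ)+b))*s3/2)^2 = 1 := by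
      rw [← hPQ, hP, hQ]
    exact near_real (d1:ℝ) (d2:ℝ) a b hndR hndR0 hab hab0 hPQ2
  · -- FAR case
    obtain ⟨m1, hm1⟩ := h60a
    obtain ⟨m2, hm2⟩ := h60b
    have hmz : ¬(m1 = 0 ∧ m2 = 0) := by
      intro ⟨hz1, hz2⟩
      exact hz ⟨by omega, by omega⟩
    have hfar : 65 ≤ 2*d1+d2 ∨ 2*d1+d2 ≤ -65 ∨ 65 ≤ d1+2*d2 ∨ d1+2*d2 ≤ -65 ∨
        65 ≤ d1-d2 ∨ d1-d2 ≤ -65 := by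
      refine far_int tp.1 tp.2 tq.1 tq.2 m1 m2 d1 d2 hpw1 hpw2 hpw3 hpw4 hpw5 hpw6
        hqw1 hqw2 hqw3 hqw4 hqw5 hqw6 hmz (by omega) (by omega)
    have hab1 : -2 ≤ 2*a+b ∧ 2*a+b ≤ 2 := by
      constructor <;> (rw [ha, hb]; linarith)
    have hab2 : -2 ≤ a+2*b ∧ a+2*b ≤ 2 := by
      constructor <;> (rw [ha, hb]; linarith)
    have hab3 : -2 ≤ a-b ∧ a-b ≤ 2 := by
      constructor <;> (rw [ha, hb]; linarith)
    rcases hfar with h | h | h | h | h | h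
    · refine far_real (x 0 - y 0) (x 1 - y 1) (2*(d1:ℝ)+(d2:ℝ)) (2*a+b) hPQ
        (Or.inl (by exact_mod_cast h)) hab1.1 hab1.2 (Or.inl ?_)
      rw [hP]; ring
    · refine far_real (x 0 - y 0) (x 1 - y 1) (2*(d1:ℝ)+(d2:ℝ)) (2*a+b) hPQ
        (Or.inr (by exact_mod_cast h)) hab1.1 hab1.2 (Or.inl ?_)
      rw [hP]; ring
    · refine far_real (x 0 - y 0) (x 1 - y 1) ((d1:ℝ)+2*(d2:ℝ)) (a+2*b) hPQ
        (Or.inl (by exact_mod_cast h)) hab2.1 hab2.2 (Or.inr (Or.inl ?_))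
      rw [hP, hQ]
      have h2 : s3 * (tc * ((d2:ℝ) + b) * s3 / 2) = tc * ((d2:ℝ)+b) * s3^2/2 := by ring
      rw [h2, s3_sq]; ring
    · refine far_real (x 0 - y 0) (x 1 - y 1) ((d1:ℝ)+2*(d2:ℝ)) (a+2*b) hPQ
        (Or.inr (by exact_mod_cast h)) hab2.1 hab2.2 (Or.inr (Or.inl ?_))
      rw [hP, hQ]
      have h2 : s3 * (tc * ((d2:ℝ) + b) * s3 / 2) = tc * ((d2:ℝ)+b) * s3^2/2 := by ring
      rw [h2, s3_sq]; ring
    · refine far_real (x 0 - y 0) (x 1 - y 1) ((d1:ℝ)-(d2:ℝ)) (a-b) hPQ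
        (Or.inl (by exact_mod_cast h)) hab3.1 hab3.2 (Or.inr (Or.inr ?_))
      rw [hP, hQ]
      have h2 : s3 * (tc * ((d2:ℝ) + b) * s3 / 2) = tc * ((d2:ℝ)+b) * s3^2/2 := by ring
      rw [h2, s3_sq]; ring
    · refine far_real (x 0 - y 0) (x 1 - y 1) ((d1:ℝ)-(d2:ℝ)) (a-b) hPQ
        (Or.inr (by exact_mod_cast h)) hab3.1 hab3.2 (Or.inr (Or.inr ?_))
      rw [hP, hQ]
      have h2 : s3 * (tc * ((d2:ℝ) + b) * s3 / 2) = tc * ((d2:ℝ)+b) * s3^2/2 := by ring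
      rw [h2, s3_sq]; ring

end
end Chi736

theorem chi_7_le_36 :
    MfoldColorable 7 36 ∧ multifoldChromaticNumber 7 ≤ 36 := by
  have hcol : MfoldColorable 7 36 :=
    ⟨Chi736.col, fun x => Chi736.card_col x, fun x y h => Chi736.col_disj x y h⟩
  exact ⟨hcol, Nat.sInf_le hcol⟩
end

section
/- There exists a 9-fold 43-coloring of the plane; that is, the 9-fold chromatic number of the plane satisfies χ_9 ≤ 43. -/
noncomputable def hexA (s : ℤ) : Finset (ℤ × ℤ) :=
  ((Finset.Icc (-3:ℤ) 2) ×ˢ (Finset.Icc (-3:ℤ) 2)).filter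
    (fun p => -3 ≤ p.1 + p.2 + s ∧ p.1 + p.2 + s ≤ 2)

def psi (u v : ℤ) : Fin 43 := ⟨((37*u + v) % 43).toNat, by omega⟩

noncomputable def xiF (x : EuclideanSpace ℝ (Fin 2)) : ℝ := 6 * x 0 - 2 * Real.sqrt 3 * x 1
noncomputable def etaF (x : EuclideanSpace ℝ (Fin 2)) : ℝ := 4 * Real.sqrt 3 * x 1

noncomputable def cA (x : EuclideanSpace ℝ (Fin 2)) : ℤ := ⌊xiF x⌋
noncomputable def cB (x : EuclideanSpace ℝ (Fin 2)) : ℤ := ⌊etaF x⌋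
noncomputable def cS (x : EuclideanSpace ℝ (Fin 2)) : ℤ := ⌊xiF x + etaF x⌋ - cA x - cB x

noncomputable def col (x : EuclideanSpace ℝ (Fin 2)) : Finset (Fin 43) :=
  ((hexA (cS x)).filter (fun α => (3:ℤ) ∣ ((cA x - α.1) - (cB x - α.2)))).image
    (fun α => psi (cA x - α.1) (cB x - α.2))

lemma cS_mem (x : EuclideanSpace ℝ (Fin 2)) : cS x = 0 ∨ cS x = 1 := by
  have h1 : (⌊xiF x⌋ : ℝ) ≤ xiF x := Int.floor_le _
  have h2 : xiF x < ⌊xiF x⌋ + 1 := Int.lt_floor_add_one _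
  have h3 : (⌊etaF x⌋ : ℝ) ≤ etaF x := Int.floor_le _
  have h4 : etaF x < ⌊etaF x⌋ + 1 := Int.lt_floor_add_one _
  have h5 : (⌊xiF x⌋ + ⌊etaF x⌋ : ℤ) ≤ ⌊xiF x + etaF x⌋ := by
    apply Int.le_floor.2; push_cast; linarith
  have h6 : ⌊xiF x + etaF x⌋ < ⌊xiF x⌋ + ⌊etaF x⌋ + 2 := by
    apply Int.floor_lt.2; push_cast; linarith
  unfold cS cA cB; omega

lemma card_lemma (s r : ℤ) (hs : s = 0 ∨ s = 1) (hr : r = 0 ∨ r = 1 ∨ r = 2) :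
    ((hexA s).filter (fun α => (α.1 - α.2) % 3 = r)).card = 9 := by
  rcases hs with hs | hs <;> rcases hr with hr | hr | hr <;> subst hs <;> subst hr <;> decide

lemma inj_lemma0 : ∀ α ∈ hexA 0, ∀ β ∈ hexA 0,
    (3:ℤ) ∣ ((α.1 - α.2) - (β.1 - β.2)) → (43:ℤ) ∣ (37*(β.1 - α.1) + (β.2 - α.2)) → α = β := by
  decide

lemma inj_lemma1 : ∀ α ∈ hexA 1, ∀ β ∈ hexA 1,
    (3:ℤ) ∣ ((α.1 - α.2) - (β.1 - β.2)) → (43:ℤ) ∣ (37*(β.1 - α.1) + (β.2 - α.2)) → α = β := by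
  decide

lemma col_card (x : EuclideanSpace ℝ (Fin 2)) : (col x).card = 9 := by
  unfold col
  rw [Finset.card_image_of_injOn]
  · have he : ((hexA (cS x)).filter (fun α => (3:ℤ) ∣ ((cA x - α.1) - (cB x - α.2)))) =
        ((hexA (cS x)).filter (fun α => (α.1 - α.2) % 3 = (cA x - cB x) % 3)) := by
      apply Finset.filter_congr
      intro α _
      constructor <;> intro h <;> omega
    rw [he]
    exact card_lemma _ _ (cS_mem x) (by omega)
  · intro α hα β hβ hψ
    simp only [Finset.coe_filter, Set.mem_setOf_eq, Finset.mem_coe] at hα hβ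
    obtain ⟨hαA, hαP⟩ := hα
    obtain ⟨hβA, hβP⟩ := hβ
    have hval : ((37*(cA x - α.1) + (cB x - α.2)) % 43).toNat
        = ((37*(cA x - β.1) + (cB x - β.2)) % 43).toNat := congrArg Fin.val hψ
    have h43 : (43:ℤ) ∣ (37*(β.1 - α.1) + (β.2 - α.2)) := by omega
    have h3 : (3:ℤ) ∣ ((α.1 - α.2) - (β.1 - β.2)) := by omega
    rcases cS_mem x with hs | hs <;> rw [hs] at hαA
    · exact inj_lemma0 α hαA β (hs ▸ hβA) h3 h43
    · exact inj_lemma1 α hαA β (hs ▸ hβA) h3 h43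

lemma hexlt (X Y : ℝ) (h1 : -6 < X) (h2 : X < 6) (h3 : -6 < Y) (h4 : Y < 6)
    (h5 : -6 < X + Y) (h6 : X + Y < 6) : X^2 + X*Y + Y^2 < 36 := by
  rcases le_or_gt 0 (X*Y) with hp | hn
  · nlinarith
  · rcases le_or_gt 0 X with hx | hx
    · have hy : Y < 0 := by nlinarith
      rcases le_or_gt (X + Y) 0 with hs | hs
      · nlinarith
      · nlinarith
    · have hy : 0 < Y := by nlinarith
      rcases le_or_gt (X + Y) 0 with hs | hs
      · nlinarith
      · nlinarith

lemma classify (i j : ℤ) (h : i^2 + i*j + j^2 < 3) :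
    (i = 0 ∧ j = 0) ∨ (i = 1 ∧ j = 0) ∨ (i = -1 ∧ j = 0) ∨ (i = 0 ∧ j = 1) ∨
    (i = 0 ∧ j = -1) ∨ (i = 1 ∧ j = -1) ∨ (i = -1 ∧ j = 1) := by
  have hj : j^2 ≤ 2 := by nlinarith [sq_nonneg (2*i + j)]
  have hi2 : (2*i + j)^2 ≤ 11 := by nlinarith [sq_nonneg j]
  have hj' : -1 ≤ j ∧ j ≤ 1 := by constructor <;> nlinarith
  have hi' : -2 ≤ i ∧ i ≤ 2 := by constructor <;> nlinarith [hj'.1, hj'.2]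
  obtain ⟨hj1, hj2⟩ := hj'; obtain ⟨hi1, hi2'⟩ := hi'
  interval_cases i <;> interval_cases j <;> omega

lemma distN (x y : EuclideanSpace ℝ (Fin 2)) (hxy : dist x y = 1) :
    (xiF x - xiF y)^2 + (xiF x - xiF y)*(etaF x - etaF y) + (etaF x - etaF y)^2 = 36 := by
  have hd : Real.sqrt (∑ i, dist (x i) (y i) ^ 2) = 1 := by
    rw [← EuclideanSpace.dist_eq]; exact hxy
  have h0 : (0:ℝ) ≤ ∑ i, dist (x i) (y i) ^ 2 :=
    Finset.sum_nonneg fun i _ => sq_nonneg _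
  have hsum : (∑ i, dist (x i) (y i) ^ 2) = 1 := by
    nlinarith [Real.sq_sqrt h0]
  have h2 : (x 0 - y 0)^2 + (x 1 - y 1)^2 = 1 := by
    rw [Fin.sum_univ_two] at hsum
    simpa [Real.dist_eq, sq_abs] using hsum
  have hs3 : Real.sqrt 3 ^ 2 = 3 := Real.sq_sqrt (by norm_num)
  unfold xiF etaF
  nlinarith [h2, hs3, sq_nonneg (x 1 - y 1)]

set_option maxHeartbeats 2000000 in
lemma col_disj (x y : EuclideanSpace ℝ (Fin 2)) (hxy : dist x y = 1) :
    Disjoint (col x) (col y) := by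
  rw [Finset.disjoint_left]
  rintro cc hx hy
  unfold col at hx hy
  obtain ⟨α, hαf, hψx⟩ := Finset.mem_image.mp hx
  obtain ⟨β, hβf, hψy⟩ := Finset.mem_image.mp hy
  rw [Finset.mem_filter] at hαf hβf
  obtain ⟨hαA, hαP⟩ := hαf
  obtain ⟨hβA, hβP⟩ := hβf
  have hval : ((37*(cA x - α.1) + (cB x - α.2)) % 43).toNat
      = ((37*(cA y - β.1) + (cB y - β.2)) % 43).toNat := by
    have := hψx.trans hψy.symm
    exact congrArg Fin.val this
  clear hx hy hψx hψy
  obtain ⟨k1, hk1⟩ : ∃ k : ℤ, (cA x - α.1) - (cA y - β.1) = k := ⟨_, rfl⟩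
  obtain ⟨k2, hk2⟩ : ∃ k : ℤ, (cB x - α.2) - (cB y - β.2) = k := ⟨_, rfl⟩
  have h43 : (43:ℤ) ∣ (37*k1 + k2) := by omega
  have h3 : (3:ℤ) ∣ (k1 - k2) := by omega
  obtain ⟨u, hu⟩ := h43
  obtain ⟨v, hv⟩ := h3
  have h3i : (3:ℤ) ∣ (5*u - 4*k1) := by omega
  have h3j : (3:ℤ) ∣ (8*u - 7*k1) := by omega
  obtain ⟨i, hi⟩ := h3i
  obtain ⟨j, hj⟩ := h3j
  have hk1e : k1 = 8*i - 5*j := by omega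
  have hk2e : k2 = 5*i + 13*j := by omega
  -- hexA membership bounds
  have hαb : -3 ≤ α.1 ∧ α.1 ≤ 2 ∧ -3 ≤ α.2 ∧ α.2 ≤ 2 ∧
      -3 ≤ α.1 + α.2 + cS x ∧ α.1 + α.2 + cS x ≤ 2 := by
    unfold hexA at hαA
    rw [Finset.mem_filter, Finset.mem_product, Finset.mem_Icc, Finset.mem_Icc] at hαA
    exact ⟨hαA.1.1.1, hαA.1.1.2, hαA.1.2.1, hαA.1.2.2, hαA.2.1, hαA.2.2⟩
  have hβb : -3 ≤ β.1 ∧ β.1 ≤ 2 ∧ -3 ≤ β.2 ∧ β.2 ≤ 2 ∧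
      -3 ≤ β.1 + β.2 + cS y ∧ β.1 + β.2 + cS y ≤ 2 := by
    unfold hexA at hβA
    rw [Finset.mem_filter, Finset.mem_product, Finset.mem_Icc, Finset.mem_Icc] at hβA
    exact ⟨hβA.1.1.1, hβA.1.1.2, hβA.1.2.1, hβA.1.2.2, hβA.2.1, hβA.2.2⟩
  -- real quantities
  obtain ⟨D1, hD1⟩ : ∃ t : ℝ, xiF x - xiF y = t := ⟨_, rfl⟩
  obtain ⟨D2, hD2⟩ : ∃ t : ℝ, etaF x - etaF y = t := ⟨_, rfl⟩
  have hN : D1^2 + D1*D2 + D2^2 = 36 := by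
    rw [← hD1, ← hD2]; exact distN x y hxy
  -- floor bounds, real versions
  have fx1 : (cA x : ℝ) ≤ xiF x := Int.floor_le _
  have fx2 : xiF x < cA x + 1 := Int.lt_floor_add_one _
  have fx3 : (cB x : ℝ) ≤ etaF x := Int.floor_le _
  have fx4 : etaF x < cB x + 1 := Int.lt_floor_add_one _
  have hsx : ((cS x : ℝ) + cA x + cB x) ≤ xiF x + etaF x ∧
      xiF x + etaF x < (cS x : ℝ) + cA x + cB x + 1 := by
    have hfl : ((⌊xiF x + etaF x⌋ : ℤ) : ℝ) = (cS x : ℝ) + cA x + cB x := by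
      unfold cS; push_cast; ring
    constructor
    · rw [← hfl]; exact Int.floor_le _
    · rw [← hfl]; exact Int.lt_floor_add_one _
  have fy1 : (cA y : ℝ) ≤ xiF y := Int.floor_le _
  have fy2 : xiF y < cA y + 1 := Int.lt_floor_add_one _
  have fy3 : (cB y : ℝ) ≤ etaF y := Int.floor_le _
  have fy4 : etaF y < cB y + 1 := Int.lt_floor_add_one _
  have hsy : ((cS y : ℝ) + cA y + cB y) ≤ xiF y + etaF y ∧
      xiF y + etaF y < (cS y : ℝ) + cA y + cB y + 1 := by
    have hfl : ((⌊xiF y + etaF y⌋ : ℤ) : ℝ) = (cS y : ℝ) + cA y + cB y := by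
      unfold cS; push_cast; ring
    constructor
    · rw [← hfl]; exact Int.floor_le _
    · rw [← hfl]; exact Int.lt_floor_add_one _
  -- cast all integer bounds to ℝ
  have hk1R : (k1 : ℝ) = ((cA x : ℝ) - α.1) - ((cA y : ℝ) - β.1) := by
    rw [← hk1]; push_cast; ring
  have hk2R : (k2 : ℝ) = ((cB x : ℝ) - α.2) - ((cB y : ℝ) - β.2) := by
    rw [← hk2]; push_cast; ring
  have ha1 : (-3:ℝ) ≤ (α.1:ℝ) ∧ (α.1:ℝ) ≤ 2 := ⟨by exact_mod_cast hαb.1, by exact_mod_cast hαb.2.1⟩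
  have ha2 : (-3:ℝ) ≤ (α.2:ℝ) ∧ (α.2:ℝ) ≤ 2 :=
    ⟨by exact_mod_cast hαb.2.2.1, by exact_mod_cast hαb.2.2.2.1⟩
  have ha3 : (-3:ℝ) ≤ (α.1:ℝ) + α.2 + cS x ∧ (α.1:ℝ) + α.2 + cS x ≤ 2 := by
    constructor
    · exact_mod_cast hαb.2.2.2.2.1
    · exact_mod_cast hαb.2.2.2.2.2
  have hb1 : (-3:ℝ) ≤ (β.1:ℝ) ∧ (β.1:ℝ) ≤ 2 := ⟨by exact_mod_cast hβb.1, by exact_mod_cast hβb.2.1⟩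
  have hb2 : (-3:ℝ) ≤ (β.2:ℝ) ∧ (β.2:ℝ) ≤ 2 :=
    ⟨by exact_mod_cast hβb.2.2.1, by exact_mod_cast hβb.2.2.2.1⟩
  have hb3 : (-3:ℝ) ≤ (β.1:ℝ) + β.2 + cS y ∧ (β.1:ℝ) + β.2 + cS y ≤ 2 := by
    constructor
    · exact_mod_cast hβb.2.2.2.2.1
    · exact_mod_cast hβb.2.2.2.2.2
  -- window bounds
  have hD1def : D1 = xiF x - xiF y := hD1.symm
  have hD2def : D2 = etaF x - etaF y := hD2.symm
  have hb1l : (k1 : ℝ) - 6 < D1 := by rw [hD1def, hk1R]; linarith [ha1.1, hb1.2]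
  have hb1u : D1 < (k1 : ℝ) + 6 := by rw [hD1def, hk1R]; linarith [ha1.2, hb1.1]
  have hb2l : (k2 : ℝ) - 6 < D2 := by rw [hD2def, hk2R]; linarith [ha2.1, hb2.2]
  have hb2u : D2 < (k2 : ℝ) + 6 := by rw [hD2def, hk2R]; linarith [ha2.2, hb2.1]
  have hb3l : (k1 : ℝ) + k2 - 6 < D1 + D2 := by
    rw [hD1def, hD2def, hk1R, hk2R]
    linarith [ha3.1, hb3.2, hsx.1, hsy.2]
  have hb3u : D1 + D2 < (k1 : ℝ) + k2 + 6 := by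
    rw [hD1def, hD2def, hk1R, hk2R]
    linarith [ha3.2, hb3.1, hsx.2, hsy.1]
  -- case analysis
  clear hval hαA hβA hαP hβP hαb hβb hu hv hi hj hk1 hk2 hk1R hk2R
  clear fx1 fx2 fx3 fx4 fy1 fy2 fy3 fy4 hsx hsy ha1 ha2 ha3 hb1 hb2 hb3
  clear hD1 hD2 hD1def hD2def hxy
  rcases lt_or_ge (i^2 + i*j + j^2) 3 with hsmall | hbig
  · rcases classify i j hsmall with ⟨hi0, hj0⟩ | ⟨hi0, hj0⟩ | ⟨hi0, hj0⟩ | ⟨hi0, hj0⟩ |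
      ⟨hi0, hj0⟩ | ⟨hi0, hj0⟩ | ⟨hi0, hj0⟩
    · -- same hexagon
      have e1 : (k1:ℝ) = 0 := by rw [hk1e, hi0, hj0]; norm_num
      have e2 : (k2:ℝ) = 0 := by rw [hk2e, hi0, hj0]; norm_num
      rw [e1] at hb1l hb1u
      rw [e2] at hb2l hb2u
      rw [e1, e2] at hb3l hb3u
      have := hexlt D1 D2 (by linarith) (by linarith) (by linarith) (by linarith)
        (by linarith) (by linarith)
      linarith
    · have e3 : (k1:ℝ) + k2 = 13 := by rw [hk1e, hk2e, hi0, hj0]; norm_num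
      rw [e3] at hb3l
      nlinarith [sq_nonneg (D1 - D2)]
    · have e3 : (k1:ℝ) + k2 = -13 := by rw [hk1e, hk2e, hi0, hj0]; norm_num
      rw [e3] at hb3u
      nlinarith [sq_nonneg (D1 - D2)]
    · have e3 : (k2:ℝ) = 13 := by rw [hk2e, hi0, hj0]; norm_num
      rw [e3] at hb2l
      nlinarith [sq_nonneg (2*D1 + D2)]
    · have e3 : (k2:ℝ) = -13 := by rw [hk2e, hi0, hj0]; norm_num
      rw [e3] at hb2u
      nlinarith [sq_nonneg (2*D1 + D2)]
    · have e3 : (k1:ℝ) = 13 := by rw [hk1e, hi0, hj0]; norm_num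
      rw [e3] at hb1l
      nlinarith [sq_nonneg (D1 + 2*D2)]
    · have e3 : (k1:ℝ) = -13 := by rw [hk1e, hi0, hj0]; norm_num
      rw [e3] at hb1u
      nlinarith [sq_nonneg (D1 + 2*D2)]
  · have hQ : (k1:ℝ)^2 + (k1:ℝ)*(k2:ℝ) + (k2:ℝ)^2 ≥ 387 := by
      have hZ : k1^2 + k1*k2 + k2^2 = 129*(i^2 + i*j + j^2) := by
        rw [hk1e, hk2e]; ring
      have hZ2 : (387:ℤ) ≤ k1^2 + k1*k2 + k2^2 := by
        rw [hZ]; nlinarith [hbig]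
      exact_mod_cast hZ2
    have hE : (D1-(k1:ℝ))^2 + (D1-(k1:ℝ))*(D2-(k2:ℝ)) + (D2-(k2:ℝ))^2 < 36 := by
      apply hexlt <;> linarith
    nlinarith [sq_nonneg ((k1:ℝ)*(D2-(k2:ℝ)) - (k2:ℝ)*(D1-(k1:ℝ))),
      sq_nonneg (2*(D1-(k1:ℝ))+(D2-(k2:ℝ))),
      sq_nonneg (D1-(k1:ℝ)), sq_nonneg (D2-(k2:ℝ)), hN, hQ, hE]

theorem chi_9_le_43 :
    MfoldColorable 9 43 ∧ multifoldChromaticNumber 9 ≤ 43 := by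
  have hcol : MfoldColorable 9 43 := ⟨col, col_card, col_disj⟩
  exact ⟨hcol, Nat.sInf_le hcol⟩
end
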